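/- arXiv:1108.0032 — 6 statements merged into one kernel-verified Lean document; each statement's English description precedes it below -/
import Mathlib

section
/- Let R be a commutative ring, let n, m ≥ 0, and let y_1, …, y_n, z_1, …, z_m ∈ R. Then Σ_{k+l=n, k,l ≥ 0} (−1)^l · S_k(y_1,…,y_n,z_1,…,z_m) · H_l(z_1,…,z_m) = S_n(y_1,…,y_n) = y_1 y_2 ⋯ y_n. -/
/-!
With `E_s(t) = ∏_{a ∈ s} (1 + a t) = ∑_k S_k(s) tᵏ` and `H_z(t) = ∑_l H_l(z) tˡ = ∏_i (1 - zᵢ t)⁻¹`,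
one has `E_{y ++ z}(t) = E_y(t) E_z(t)` and `E_z(t) H_z(-t) = 1`, so `E_{y ++ z}(t) H_z(-t) = E_y(t)`;
the identity is the comparison of the coefficients of `tⁿ`. Finally `S_n(y₁, …, yₙ) = y₁ ⋯ yₙ`, since
the only `n`-element sub-multiset of `{y₁, …, yₙ}` is the whole multiset.
-/

/-- The `l`-th complete homogeneous symmetric polynomial of the elements
`y 0, …, y (m-1)`. -/
noncomputable def hsymm {R : Type*} [CommRing R] {m : ℕ} (y : Fin m → R) (l : ℕ) : R :=
  ∑ t : Sym (Fin m) l, ((t : Multiset (Fin m)).map y).prod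

section

open PowerSeries Finset

namespace Multiset

variable {R : Type*} [CommSemiring R]

theorem esymm_cons_succ (a : R) (s : Multiset R) (d : ℕ) :
    (a ::ₘ s).esymm (d + 1) = s.esymm (d + 1) + a * s.esymm d := by
  simp only [esymm, powersetCard_cons, map_add, sum_add, map_map, Function.comp_def, prod_cons,
    sum_map_mul_left]

theorem esymm_card (s : Multiset R) : s.esymm (card s) = s.prod := by
  simp [esymm, powersetCard_self]

theorem mk_esymm (s : Multiset R) : mk s.esymm = (s.map fun a => 1 + C a * X).prod := by
  induction s using Multiset.induction_on with
  | empty => ext (_ | d) <;> simp [esymm, powersetCard_zero_right, coeff_one]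
  | cons a s ih =>
    rw [map_cons, prod_cons, ← ih]
    ext (_ | d)
    · simp [esymm]
    · simp [esymm_cons_succ, add_mul, mul_assoc, coeff_succ_X_mul]

end Multiset

theorem Fintype.prod_multiset_map_count {ι M : Type*} [Fintype ι] [DecidableEq ι] [CommMonoid M]
    (s : Multiset ι) (f : ι → M) : (s.map f).prod = ∏ i, f i ^ s.count i := by
  rw [Finset.prod_multiset_map_count]
  refine Finset.prod_subset (subset_univ _) fun i _ hi => ?_
  rw [Multiset.count_eq_zero_of_notMem (by simpa using hi), pow_zero]

variable {R : Type*} [CommRing R] {m : ℕ}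

theorem hsymm_eq_sum_finsuppAntidiag (z : Fin m → R) (d : ℕ) :
    hsymm z d = ∑ l ∈ finsuppAntidiag univ d, ∏ i, z i ^ l i := by
  let e : Sym (Fin m) d ≃ finsuppAntidiag (univ : Finset (Fin m)) d :=
    (Sym.equivNatSum _ _).trans (Equiv.subtypeEquivRight fun P => by simp [Finsupp.sum_fintype])
  rw [hsymm, ← sum_coe_sort (finsuppAntidiag univ d)]
  exact Fintype.sum_equiv e _ _ fun t => Fintype.prod_multiset_map_count _ _

theorem mk_hsymm (z : Fin m → R) : mk (hsymm z) = ∏ i, rescale (z i) (mk 1) := by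
  ext d
  simp [coeff_prod, hsymm_eq_sum_finsuppAntidiag, coeff_rescale]

theorem PowerSeries.one_add_C_mul_X_mul_rescale_neg_mk_one (a : R) :
    (1 + C a * X) * rescale (-a) (mk 1) = 1 := by
  have h := congrArg (rescale (-a)) (mk_one_mul_one_sub_eq_one (S := R))
  rwa [map_mul, mul_comm, map_sub, map_one, rescale_X, map_neg, neg_mul, sub_neg_eq_add] at h

theorem prod_one_add_C_mul_X_mul_rescale_neg_one_mk_hsymm (z : Fin m → R) :
    (∏ i, (1 + C (z i) * X)) * rescale (-1) (mk (hsymm z)) = 1 := by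
  rw [mk_hsymm, map_prod, ← prod_mul_distrib]
  simp only [rescale_rescale, mul_neg_one, one_add_C_mul_X_mul_rescale_neg_mk_one, prod_const_one]

theorem sum_neg_one_pow_mul_esymm_add_mul_hsymm (s : Multiset R) (z : Fin m → R) (n : ℕ) :
    ∑ l ∈ range (n + 1), (-1 : R) ^ l * (s + ↑(List.ofFn z)).esymm (n - l) * hsymm z l =
      s.esymm n := by
  have key : rescale (-1) (mk (hsymm z)) * mk (s + ↑(List.ofFn z)).esymm = mk s.esymm := by
    rw [Multiset.mk_esymm, Multiset.mk_esymm, Multiset.map_add, Multiset.prod_add, mul_comm,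
      mul_assoc, ← Fin.univ_val_map, Multiset.map_map, Function.comp_def, prod_map_val,
      prod_one_add_C_mul_X_mul_rescale_neg_one_mk_hsymm, mul_one]
  have := congrArg (coeff n) key
  rw [coeff_mul, Nat.sum_antidiagonal_eq_sum_range_succ (fun i j => coeff i _ * coeff j _)] at this
  simpa [coeff_rescale, mul_comm, mul_left_comm, mul_assoc] using this

end

/-- Lemma 5.4:
`Σ_{k+l=n} (−1)^l S_k(y_1,…,y_n,z_1,…,z_m) H_l(z_1,…,z_m) = S_n(y_1,…,y_n) = y_1 ⋯ y_n`. -/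
theorem sum_alternating_esymm_append_mul_hsymm
    {R : Type*} [CommRing R] (n m : ℕ) (y : Fin n → R) (z : Fin m → R) :
    (∑ l ∈ Finset.range (n + 1),
        (-1 : R) ^ l *
          ((↑(List.ofFn y) + ↑(List.ofFn z) : Multiset R).esymm (n - l)) * hsymm z l)
        = (↑(List.ofFn y) : Multiset R).esymm n
      ∧ (↑(List.ofFn y) : Multiset R).esymm n = ∏ i, y i := by
  refine ⟨sum_neg_one_pow_mul_esymm_add_mul_hsymm _ z n, ?_⟩
  simpa [List.prod_ofFn] using Multiset.esymm_card (↑(List.ofFn y) : Multiset R)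
end

section
/- Let R be a commutative ring and let (n, k, m, In, Out, B, G_i, a_i, b_i, c_i, d_i) be a braid-strip datum over R. Then the element Π_{u ∈ Out} u − Π_{u ∈ In} u (products over the multisets Out and In with multiplicity) lies in the ideal of R generated by the 2m elements a_i + b_i − c_i − d_i and a_i b_i − c_i d_i for 1 ≤ i ≤ m. (This is the abstract form of Proposition 5.2: for a partial braid graph S with vertex set W, the element N(W) = Π_{e ∈ Out(W)} U_e − Π_{e ∈ In(W)} U_e lies in the ideal L + Q generated by the linear elements L(p) and the quadratic elements Q(p) associated to the crossings.) -/
/-- The elementary symmetric polynomials of a finite multiset, indexed by ℤ,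
with the convention that `S_k = 0` for `k < 0`. -/
noncomputable def esymmZ {R : Type*} [CommRing R] (s : Multiset R) (k : ℤ) : R :=
  if 0 ≤ k then s.esymm k.toNat else 0

/-- A braid-strip datum over `R`: the combinatorial data extracted from slicing a
partial braid graph into horizontal strips, one per crossing.  `In` and `Out` are
the multisets of variables on the incoming and outgoing exterior edges (each of
cardinality `n`), `B 0, …, B (k-1)` are the variables on the strands closing the
braid, `G i` is the multiset of variables crossing a horizontal line with the two
edges at the `i`-th crossing removed, and `a i, b i` (resp. `c i, d i`) are the
variables on the edges leaving (resp. entering) the `i`-th crossing.  Setting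
`F 0 = In + B` and `F i = G i + {a i, b i}`, we require `F (i-1) = G i + {c i, d i}`
for `1 ≤ i ≤ m` and `F m = Out + B`. -/
structure BraidStripDatum (R : Type*) [CommRing R] where
  n : ℕ
  k : ℕ
  m : ℕ
  hm : 1 ≤ m
  In : Multiset R
  Out : Multiset R
  hIn : Multiset.card In = n
  hOut : Multiset.card Out = n
  B : Fin k → R
  G : Fin m → Multiset R
  a : Fin m → R
  b : Fin m → R
  c : Fin m → R
  d : Fin m → R
  hfirst : In + ↑(List.ofFn B) =
    c ⟨0, hm⟩ ::ₘ d ⟨0, hm⟩ ::ₘ G ⟨0, hm⟩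
  hstep : ∀ i : Fin m, ∀ h : i.val + 1 < m,
    a i ::ₘ b i ::ₘ G i =
      c ⟨i.val + 1, h⟩ ::ₘ d ⟨i.val + 1, h⟩ ::ₘ G ⟨i.val + 1, h⟩
  hlast : a ⟨m - 1, by omega⟩ ::ₘ b ⟨m - 1, by omega⟩ ::ₘ G ⟨m - 1, by omega⟩ =
    Out + ↑(List.ofFn B)

/-!
Modulo the ideal, `(X + a)(X + b) = (X + c)(X + d)` at every crossing, since both sides are
`X² + (a + b) X + ab`. Hence the polynomial `∏_{u ∈ F} (X + u)` of a horizontal slice `F` is the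
same for all slices, in particular for `In + B` and `Out + B`. These polynomials are monic, so the
common factor `∏_{u ∈ B} (X + u)` cancels, and evaluating at `0` gives `∏ Out = ∏ In`.
-/

open Polynomial

namespace Polynomial

variable {S : Type*} [CommRing S]

theorem X_add_C_mul_X_add_C_eq {a b c d : S} (hsum : a + b = c + d) (hprod : a * b = c * d) :
    (X + C a) * (X + C b) = (X + C c) * (X + C d) := by
  have hsum' : C a + C b = C c + C d := by rw [← C_add, ← C_add, hsum]
  have hprod' : C a * C b = C c * C d := by rw [← C_mul, ← C_mul, hprod]
  linear_combination X * hsum' + hprod'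

theorem eval_zero_multiset_prod_X_add_C (s : Multiset S) :
    ((s.map fun u => X + C u).prod).eval 0 = s.prod := by
  simp [eval_multiset_prod]

theorem multiset_prod_eq_of_prod_X_add_C_add_eq {s s' t : Multiset S}
    (h : ((s + t).map fun u => X + C u).prod = ((s' + t).map fun u => X + C u).prod) :
    s.prod = s'.prod := by
  have hmonic : ((t.map fun u => X + C u).prod).Monic :=
    monic_multiset_prod_of_monic t _ fun u _ => monic_X_add_C u
  rw [Multiset.map_add, Multiset.map_add, Multiset.prod_add, Multiset.prod_add] at h
  rw [← eval_zero_multiset_prod_X_add_C s, ← eval_zero_multiset_prod_X_add_C s',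
    hmonic.isRegular.right h]

end Polynomial

namespace BraidStripDatum

variable {R : Type*} [CommRing R] (D : BraidStripDatum R)

theorem apply_out_add_eq_apply_in_add {α : Type*} (Φ : Multiset R → α)
    (hΦ : ∀ i G, Φ (D.c i ::ₘ D.d i ::ₘ G) = Φ (D.a i ::ₘ D.b i ::ₘ G)) :
    Φ (D.Out + ↑(List.ofFn D.B)) = Φ (D.In + ↑(List.ofFn D.B)) := by
  have slice : ∀ l (hl : l < D.m),
      Φ (D.a ⟨l, hl⟩ ::ₘ D.b ⟨l, hl⟩ ::ₘ D.G ⟨l, hl⟩) = Φ (D.In + ↑(List.ofFn D.B)) := by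
    intro l
    induction l with
    | zero => intro hl; rw [D.hfirst, hΦ]
    | succ l ih =>
      intro hl
      rw [← hΦ, ← D.hstep ⟨l, by omega⟩ hl, ih]
  rw [← D.hlast, slice]

end BraidStripDatum

/-- Proposition 5.2 (abstract form): for a braid-strip datum,
`Π_{e ∈ Out} U_e − Π_{e ∈ In} U_e` lies in the ideal generated by the linear
elements `L(p_i) = a_i + b_i − c_i − d_i` and the quadratic elements
`Q(p_i) = a_i b_i − c_i d_i`. -/
theorem braidStrip_prod_sub_prod_mem_span
    {R : Type*} [CommRing R] (D : BraidStripDatum R) :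
    D.Out.prod - D.In.prod ∈
      Ideal.span ((Set.range fun i : Fin D.m => D.a i + D.b i - D.c i - D.d i) ∪
        (Set.range fun i : Fin D.m => D.a i * D.b i - D.c i * D.d i)) := by
  set I := Ideal.span ((Set.range fun i : Fin D.m => D.a i + D.b i - D.c i - D.d i) ∪
    (Set.range fun i : Fin D.m => D.a i * D.b i - D.c i * D.d i))
  let π := Ideal.Quotient.mk I
  have hsum i : π (D.a i) + π (D.b i) = π (D.c i) + π (D.d i) := by
    rw [← map_add, ← map_add, Ideal.Quotient.eq, ← sub_sub]
    exact Ideal.subset_span (Or.inl ⟨i, rfl⟩)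
  have hprod i : π (D.a i) * π (D.b i) = π (D.c i) * π (D.d i) := by
    rw [← map_mul, ← map_mul, Ideal.Quotient.eq]
    exact Ideal.subset_span (Or.inr ⟨i, rfl⟩)
  have hslices := D.apply_out_add_eq_apply_in_add
    (fun s => ((s.map π).map fun u => X + C u).prod) fun i G => by
      simp only [Multiset.map_cons, Multiset.prod_cons, ← mul_assoc,
        X_add_C_mul_X_add_C_eq (hsum i) (hprod i)]
  rw [Multiset.map_add π, Multiset.map_add π] at hslices
  have hquot : π D.Out.prod = π D.In.prod := by
    rw [map_multiset_prod, map_multiset_prod]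
    exact multiset_prod_eq_of_prod_X_add_C_add_eq hslices
  exact Ideal.Quotient.eq.mp hquot
end

section
/- Let R = ℤ[U_1, U_2, U_3] be the polynomial ring in three variables over ℤ, let M = R/(U_1 U_3 − U_2 U_3), and let π : M → R/(U_1 − U_2) be the natural quotient map (well-defined since (U_1 U_3 − U_2 U_3) ⊆ (U_1 − U_2)). Then the image under π of the submodule {x ∈ M : (U_1 − U_2)·x = 0} equals the R-submodule of R/(U_1 − U_2) generated by the class of U_3, and this submodule is proper. In particular, the map induced by π from the (U_1 − U_2)-torsion of M to the (U_1 − U_2)-torsion of R/(U_1 − U_2) (which is all of R/(U_1 − U_2)) is not surjective, so the natural map f_1 : Tor_1(R/L, R/Q) → Tor_1(R/L, R/N) is not an isomorphism. -/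
/-!
Since `Q = ((U₁ − U₂) U₃)` and `U₁ − U₂` is a nonzerodivisor, an element `a` of `R` is
`(U₁ − U₂)`-torsion modulo `Q` exactly when `U₃ ∣ a`; so the torsion of `R/Q` is generated by
the class of `U₃`, and so is its image. That image is proper because `U₁ − U₂` and `U₃` both lie
in the kernel of evaluation at the origin.
-/

open MvPolynomial

/-- `R = ℤ[U₁, U₂, U₃]`, with `U₁ = X 0`, `U₂ = X 1`, `U₃ = X 2`. -/
abbrev R3 : Type := MvPolynomial (Fin 3) ℤ

/-- The ideal `Q = (U₁U₃ − U₂U₃)` of the one-crossing partial braid graph. -/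
noncomputable def Q3 : Ideal R3 := Ideal.span {X 0 * X 2 - X 1 * X 2}

/-- The ideal `L = N = (U₁ − U₂)`. -/
noncomputable def N3 : Ideal R3 := Ideal.span {X 0 - X 1}

lemma Q3_le_N3 : Q3 ≤ N3 := by
  rw [Q3, Ideal.span_le]
  rintro x rfl
  exact Ideal.mem_span_singleton.2 ⟨X 2, by ring⟩

/-- The natural quotient map `π : R/Q → R/N`, as an `R`-linear map. -/
noncomputable def π3 : (R3 ⧸ Q3) →ₗ[R3] (R3 ⧸ N3) :=
  Submodule.mapQ Q3 N3 LinearMap.id Q3_le_N3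

theorem torsionBy_quotient_eq_span_mk {R : Type*} [CommRing R] {t : R} (ht : IsLeftRegular t)
    (u : R) {I : Ideal R} (hI : I = Ideal.span {t * u}) :
    Submodule.torsionBy R (R ⧸ I) t = Submodule.span R {Ideal.Quotient.mk I u} := by
  subst hI
  apply le_antisymm
  · intro x hx
    obtain ⟨a, rfl⟩ := Ideal.Quotient.mk_surjective x
    have hta : t * a ∈ Ideal.span {t * u} := Ideal.Quotient.eq_zero_iff_mem.1 hx
    obtain ⟨c, hc⟩ := Ideal.mem_span_singleton.1 hta
    have hac : a = c * u := ht (hc.trans (by ring))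
    exact Submodule.mem_span_singleton.2 ⟨c, by rw [hac]; rfl⟩
  · rw [Submodule.span_le, Set.singleton_subset_iff]
    exact Ideal.Quotient.eq_zero_iff_mem.2 (Ideal.mem_span_singleton_self _)

theorem span_singleton_mk_ne_top {R : Type*} [CommRing R] {I J : Ideal R} (hIJ : I ≤ J)
    (hJ : J ≠ ⊤) {u : R} (hu : u ∈ J) :
    Submodule.span R {Ideal.Quotient.mk I u} ≠ ⊤ := by
  intro h
  have hone : Ideal.Quotient.mk I 1 ∈ Submodule.span R {Ideal.Quotient.mk I u} :=
    h ▸ Submodule.mem_top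
  obtain ⟨r, hr⟩ := Submodule.mem_span_singleton.1 hone
  have hru : r * u - 1 ∈ J := hIJ (Ideal.Quotient.eq.1 hr)
  exact hJ ((Ideal.eq_top_iff_one J).2 (by simpa using J.sub_mem (J.mul_mem_left r hu) hru))

theorem Q3_eq_span_mul : Q3 = Ideal.span {(X 0 - X 1) * X 2} := by
  rw [Q3.eq_1, sub_mul]

theorem isLeftRegular_X_sub_X : IsLeftRegular (X 0 - X 1 : R3) :=
  (IsRegular.of_ne_zero (sub_ne_zero.2 (X_injective.ne (by decide)))).left

theorem N3_le_ker_eval_zero : N3 ≤ RingHom.ker (eval (0 : Fin 3 → ℤ)) := by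
  rw [N3.eq_1, Ideal.span_le, Set.singleton_subset_iff]
  simp

/-- The image under `π` of the `(U₁ − U₂)`-torsion of `M = R/Q` is the proper
submodule of `R/(U₁ − U₂)` generated by the class of `U₃`; in particular the
natural map `f₁ : Tor₁(R/L, R/Q) → Tor₁(R/L, R/N)` is not an isomorphism. -/
theorem image_of_torsion_eq_span_U3 :
    Submodule.map π3 (Submodule.torsionBy R3 (R3 ⧸ Q3) (X 0 - X 1))
        = Submodule.span R3 {Ideal.Quotient.mk N3 (X 2)}
      ∧ Submodule.span R3 {Ideal.Quotient.mk N3 (X 2)} ≠ ⊤ := by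
  refine ⟨?_, span_singleton_mk_ne_top N3_le_ker_eval_zero (RingHom.ker_ne_top _) (by simp)⟩
  rw [torsionBy_quotient_eq_span_mk isLeftRegular_X_sub_X (X 2) Q3_eq_span_mul,
    Submodule.map_span, Set.image_singleton]
  rfl
end

section
/- Let R = ℤ[U_1, U_2, U_3, U_4] be the polynomial ring in four variables over ℤ, and let Q = (U_1(U_2 − U_4), U_3(U_2 − U_4)) ⊆ R. Then the R-module T = {x ∈ R/Q : (U_2 − U_4)·x = 0} is isomorphic to the quotient of the free module R² by the submodule generated by the three elements ((U_2 − U_4), 0), (0, (U_2 − U_4)), and (U_3, −U_1). (This computes Tor_1(R/L, R/Q) ≅ R'⟨x,y⟩/(U_3 x − U_1 y) over R' = R/(U_2 − U_4) for the total braid graph of Figure 12.) -/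
open MvPolynomial

/-- `R = ℤ[U₁, U₂, U₃, U₄]`, with `Uᵢ = X (i-1)`. -/
abbrev R4 : Type := MvPolynomial (Fin 4) ℤ

/-- The ideal `Q = (U₁(U₂ − U₄), U₃(U₂ − U₄))` of the total braid graph of
Figure 12. -/
noncomputable def Q4 : Ideal R4 :=
  Ideal.span {X 0 * (X 1 - X 3), X 2 * (X 1 - X 3)}

/-!
Writing `Q = t • (a, b)` with `t` a non-zero-divisor, the `t`-torsion of `R/Q` is `(a, b)/Q`,
the image of `(x, y) ↦ x a + y b`. Since `b` is prime and `b ∤ a`, the only syzygy of `(a, b)`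
is `(b, -a)`, so the kernel of `R² → (a, b)/Q` is spanned by `t R²` and `(b, -a)`.
-/

open Submodule LinearMap

namespace Ideal

variable {R : Type*} [CommRing R]

theorem mul_mem_span_pair_mul_iff {a b t r : R} (ht : IsLeftRegular t) :
    t * r ∈ span {a * t, b * t} ↔ r ∈ span {a, b} := by
  simp only [mem_span_pair]
  constructor
  · rintro ⟨c, d, h⟩
    exact ⟨c, d, ht (by linear_combination h)⟩
  · rintro ⟨c, d, h⟩
    exact ⟨c, d, by linear_combination t * h⟩

theorem mkQ_mem_torsionBy_span_pair_mul_iff {a b t : R} (ht : IsLeftRegular t) (r : R) :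
    (span {a * t, b * t}).mkQ r ∈ torsionBy R (R ⧸ span {a * t, b * t}) t ↔ r ∈ span {a, b} := by
  rw [mem_torsionBy_iff, ← map_smul, mkQ_apply, Quotient.mk_eq_zero, smul_eq_mul,
    mul_mem_span_pair_mul_iff ht]

theorem torsionBy_quotient_span_pair_mul {a b t : R} (ht : IsLeftRegular t) :
    torsionBy R (R ⧸ span {a * t, b * t}) t =
      Submodule.map (span {a * t, b * t}).mkQ (span {a, b}) := by
  ext x
  constructor
  · intro hx
    obtain ⟨r, rfl⟩ := mkQ_surjective _ x
    exact ⟨r, (mkQ_mem_torsionBy_span_pair_mul_iff ht r).1 hx, rfl⟩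
  · rintro ⟨r, hr, rfl⟩
    exact (mkQ_mem_torsionBy_span_pair_mul_iff ht r).2 hr

end Ideal

section PairCombination

variable {R M : Type*} [CommRing R] [AddCommGroup M] [Module R M]

theorem LinearMap.range_coprod_toSpanSingleton (a b : M) :
    range ((toSpanSingleton R M a).coprod (toSpanSingleton R M b)) = span R {a, b} := by
  rw [range_coprod, ← span_singleton_eq_range, ← span_singleton_eq_range, span_insert]

theorem LinearMap.ker_coprod_toSpanSingleton_of_prime [IsDomain R] {a b : R} (hb : Prime b)
    (hba : ¬ b ∣ a) :
    ker ((toSpanSingleton R R a).coprod (toSpanSingleton R R b)) = span R {(b, -a)} := by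
  refine le_antisymm ?_ ((span_singleton_le_iff_mem _ _).2 ?_)
  · rintro ⟨x, y⟩ hxy
    have hxy : x * a + y * b = 0 := by simpa using hxy
    obtain ⟨c, rfl⟩ : b ∣ x :=
      (hb.dvd_or_dvd ⟨-y, by linear_combination hxy⟩).resolve_right hba
    have hy : y = -(c * a) :=
      mul_left_cancel₀ hb.ne_zero (by linear_combination hxy)
    exact mem_span_singleton.2 ⟨c, by simp [hy, mul_comm]⟩
  · simp only [mem_ker, coprod_apply, toSpanSingleton_apply, smul_eq_mul]
    ring

theorem LinearMap.comap_coprod_toSpanSingleton_span_pair_mul (a b t : R) :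
    comap ((toSpanSingleton R R a).coprod (toSpanSingleton R R b)) (Ideal.span {a * t, b * t}) =
      span R {(t, 0), (0, t)} ⊔ ker ((toSpanSingleton R R a).coprod (toSpanSingleton R R b)) := by
  rw [← comap_map_eq, map_span, Set.image_pair]
  simp [mul_comm]

end PairCombination

noncomputable def torsionByQuotientSpanPairMulEquiv {R : Type*} [CommRing R] [IsDomain R] {a b t : R}
    (ht : t ≠ 0) (hb : Prime b) (hba : ¬ b ∣ a) :
    torsionBy R (R ⧸ Ideal.span {a * t, b * t}) t ≃ₗ[R]
      (R × R) ⧸ span R {(t, 0), (0, t), (b, -a)} :=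
  let ψ := (Ideal.span {a * t, b * t}).mkQ ∘ₗ (toSpanSingleton R R a).coprod (toSpanSingleton R R b)
  have hrange : range ψ = torsionBy R (R ⧸ Ideal.span {a * t, b * t}) t := by
    rw [Ideal.torsionBy_quotient_span_pair_mul (IsRegular.of_ne_zero ht).left, range_comp,
      range_coprod_toSpanSingleton]
  have hker : ker ψ = span R {(t, 0), (0, t), (b, -a)} := by
    rw [ker_comp, ker_mkQ, comap_coprod_toSpanSingleton_span_pair_mul,
      ker_coprod_toSpanSingleton_of_prime hb hba, ← span_union, Set.insert_union,
      Set.singleton_union]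
  (LinearEquiv.ofEq _ _ hrange).symm ≪≫ₗ ψ.quotKerEquivRange.symm ≪≫ₗ quotEquivOfEq _ _ hker

/-- For the total braid graph of Figure 12, the `(U₂ − U₄)`-torsion of `R/Q`
(i.e. `Tor₁(R/L, R/Q)`) is isomorphic to `R² / ⟨(U₂−U₄, 0), (0, U₂−U₄), (U₃, −U₁)⟩`,
which is `R'⟨x, y⟩/(U₃ x − U₁ y)` over `R' = R/(U₂ − U₄)`. -/
theorem torsionBy_quotient_iso_pair :
    Nonempty
      ((Submodule.torsionBy R4 (R4 ⧸ Q4) (X 1 - X 3)) ≃ₗ[R4]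
        ((R4 × R4) ⧸ (Submodule.span R4
          {((X 1 - X 3 : R4), (0 : R4)), ((0 : R4), (X 1 - X 3 : R4)),
            ((X 2 : R4), (-(X 0) : R4))}))) :=
  ⟨torsionByQuotientSpanPairMulEquiv (sub_ne_zero.2 (X_injective.ne (by decide))) X_prime
    (by simp)⟩
end

section
/- Let R = ℤ[U_1, U_2, U_3, U_4] be the polynomial ring in four variables over ℤ, and let Q = (U_1(U_2 − U_4), U_3(U_2 − U_4)) ⊆ R. Then the R-module T = {x ∈ R/Q : (U_2 − U _4)·x = 0} is NOT isomorphic, as an R-module, to R/(U_2 − U_4). (Consequently Tor_1(R/L, R/Q) ≇ Tor_1(R/L, R/N) for the total braid graph of Figure 12, so the conclusion of Conjecture 2 fails for total braid graphs, i.e. when the graph has no loose ends.) -/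
/-!
Since `Q = d·(U₁, U₃)` with `d = U₂ − U₄` a non-zero-divisor, the `d`-torsion of `R/Q` is
`(U₁, U₃)/Q`, generated by the classes `t₁, t₂` of `U₁, U₃`, which satisfy the Koszul relation
`U₃ t₁ = U₁ t₂`. An isomorphism with `R/(d)` sends them to classes of some `α, β` with
`U₃α ≡ U₁β (mod d)` and `(α, β, d) = R`. Substituting `U₃ ↦ T` and `0` for the other variables
kills `d` and turns the relation into `T·α(0, 0, T, 0) = 0`, so `α` has no constant term;
likewise `β`. As `d` has none either, `(α, β, d) ≠ R`.
-/

open MvPolynomial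

theorem Submodule.torsionBy_quotient_span_singleton_mul {R : Type*} [CommRing R] {d : R}
    (hd : IsSMulRegular R d) (I : Ideal R) :
    torsionBy R (R ⧸ Ideal.span {d} * I) d = Submodule.map (Ideal.span {d} * I).mkQ I := by
  ext x
  obtain ⟨ξ, rfl⟩ := (Ideal.span {d} * I).mkQ_surjective x
  rw [mem_torsionBy_iff, ← map_smul, mkQ_apply, Quotient.mk_eq_zero, smul_eq_mul,
    Ideal.mem_span_singleton_mul]
  constructor
  · rintro ⟨z, hz, hdz⟩
    exact ⟨ξ, (hd hdz) ▸ hz, rfl⟩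
  · rintro ⟨y, hy, hyξ⟩
    rw [mkQ_apply, mkQ_apply, Quotient.eq] at hyξ
    have hyξ' : y - ξ ∈ I := Ideal.mul_le_right hyξ
    exact ⟨ξ, by simpa using I.sub_mem hy hyξ', rfl⟩

theorem exists_span_pair_sup_eq_top_of_linearEquiv_quotient {R M : Type*} [CommRing R]
    [AddCommGroup M] [Module R M] {J : Ideal R} {N : Submodule R M} (e : N ≃ₗ[R] R ⧸ J)
    {x y : M} {a b : R}
    (hN : N = Submodule.span R {x, y}) (hrel : b • x = a • y) :
    ∃ α β : R, b * α - a * β ∈ J ∧ Ideal.span {α, β} ⊔ J = ⊤ := by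
  have hx : x ∈ N := hN ▸ Submodule.subset_span (by simp)
  have hy : y ∈ N := hN ▸ Submodule.subset_span (by simp)
  obtain ⟨α, hα⟩ := Ideal.Quotient.mk_surjective (e ⟨x, hx⟩)
  obtain ⟨β, hβ⟩ := Ideal.Quotient.mk_surjective (e ⟨y, hy⟩)
  refine ⟨α, β, ?_, ?_⟩
  · have hrel' : b • (⟨x, hx⟩ : N) - a • ⟨y, hy⟩ = 0 := Subtype.ext (sub_eq_zero.2 hrel)
    have he : e (b • ⟨x, hx⟩ - a • ⟨y, hy⟩) = Ideal.Quotient.mk J (b * α - a * β) := by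
      rw [map_sub e, map_smul e, map_smul e, ← hα, ← hβ]
      rfl
    rw [← Ideal.Quotient.eq_zero_iff_mem, ← he, hrel', map_zero]
  · obtain ⟨⟨z, hz⟩, hz1⟩ := e.surjective 1
    obtain ⟨p, q, rfl⟩ := Submodule.mem_span_pair.1 (hN ▸ hz)
    have hpq : (⟨p • x + q • y, hz⟩ : N) = p • ⟨x, hx⟩ + q • ⟨y, hy⟩ := rfl
    rw [hpq, map_add, map_smul, map_smul, ← hα, ← hβ] at hz1
    rw [Ideal.eq_top_iff_one, ← sub_add_cancel 1 (p * α + q * β)]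
    refine add_mem (Ideal.mem_sup_right ?_) (Ideal.mem_sup_left (Ideal.mem_span_pair.2 ⟨p, q, rfl⟩))
    rw [← Ideal.Quotient.eq_zero_iff_mem, map_sub, map_one, ← hz1, sub_eq_zero]
    rfl

theorem MvPolynomial.eval_zero_aeval_single_X {σ R : Type*} [CommRing R] [DecidableEq σ] (i : σ)
    (p : MvPolynomial σ R) :
    (aeval (Pi.single i Polynomial.X) p).eval 0 = constantCoeff p := by
  induction p using MvPolynomial.induction_on with
  | C r => simp
  | add p q hp hq => simp [hp, hq]
  | mul_X p j hp =>
    rcases eq_or_ne j i with rfl | hj <;> simp [*]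

theorem MvPolynomial.constantCoeff_eq_zero_of_X_mul_sub_X_mul_mem {σ R : Type*} [CommRing R]
    [DecidableEq σ] {i j : σ} (hij : i ≠ j) {d α β : MvPolynomial σ R}
    (hd : aeval (Pi.single i (Polynomial.X : Polynomial R)) d = 0)
    (h : X i * α - X j * β ∈ Ideal.span {d}) :
    constantCoeff α = 0 := by
  obtain ⟨γ, hγ⟩ := Ideal.mem_span_singleton'.1 h
  have hX : (Polynomial.X : Polynomial R) * aeval (Pi.single i Polynomial.X) α =
      Polynomial.X * 0 := by
    simpa [hd, hij.symm] using congrArg (aeval (Pi.single i (Polynomial.X : Polynomial R))) hγ.symm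
  rw [← eval_zero_aeval_single_X i, Polynomial.isRegular_X.left hX, Polynomial.eval_zero]

/-- For the total braid graph of Figure 12, the `(U₂ − U₄)`-torsion of `R/Q`
(i.e. `Tor₁(R/L, R/Q)`) is not isomorphic as an `R`-module to `R/(U₂ − U₄)`
(i.e. to `Tor₁(R/L, R/N)`): Conjecture 2 fails for total braid graphs. -/
theorem torsionBy_quotient_not_iso :
    ¬ Nonempty
      ((Submodule.torsionBy R4 (R4 ⧸ Q4) (X 1 - X 3)) ≃ₗ[R4]
        (R4 ⧸ (Ideal.span {X 1 - X 3} : Ideal R4))) := by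
  rintro ⟨e⟩
  have hd : IsSMulRegular R4 (X 1 - X 3 : R4) :=
    (IsRegular.of_ne_zero (sub_ne_zero.2 ((X_injective (R := ℤ)).ne (by decide)))).left
      |>.isSMulRegular
  have hQ : Q4 = Ideal.span {X 1 - X 3} * Ideal.span {X 0, X 2} := by
    simp [Q4, Ideal.span_mul_span', Set.image_pair, mul_comm]
  have hT : Submodule.torsionBy R4 (R4 ⧸ Q4) (X 1 - X 3) =
      Submodule.span R4 {Q4.mkQ (X 0), Q4.mkQ (X 2)} := by
    rw [hQ, Submodule.torsionBy_quotient_span_singleton_mul hd, Submodule.map_span, Set.image_pair]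
  have hkoszul : (X 2 : R4) • Q4.mkQ (X 0) = (X 0 : R4) • Q4.mkQ (X 2) := by
    rw [← map_smul, ← map_smul, smul_eq_mul, smul_eq_mul, mul_comm]
  obtain ⟨α, β, hαβ, hunit⟩ := exists_span_pair_sup_eq_top_of_linearEquiv_quotient e hT hkoszul
  have hα : constantCoeff α = 0 :=
    constantCoeff_eq_zero_of_X_mul_sub_X_mul_mem (by decide) (by simp) hαβ
  have hβ : constantCoeff β = 0 :=
    constantCoeff_eq_zero_of_X_mul_sub_X_mul_mem (by decide) (by simp)
      (neg_sub (X 2 * α) (X 0 * β) ▸ neg_mem hαβ)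
  refine RingHom.ker_ne_top (constantCoeff : R4 →+* ℤ) (top_le_iff.1 (hunit ▸ sup_le ?_ ?_))
  · simp [Ideal.span_le, Set.insert_subset_iff, hα, hβ]
  · simp [Ideal.span_le]
end

section
/- Let R = ℤ[U_a, U_b, U_c, U_d, U_e, U_f, U_g] be the polynomial ring in seven variables over ℤ. Let L be the ideal generated by U_a + U_b − U_c − U_d and U_e + U_d − U_f − U_g, and let Q be the ideal generated by U_a U_b − U_c U_d, U_e U_d − U_f U_g, and U_g − U_b. Then U_a U_e − U_c U_f ∈ L + Q. Consequently, for N = Q + (U_a U_e − U_c U_f), one has L + N = L + Q. -/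
open MvPolynomial

/-- `R = ℤ[U_a, …, U_g]`, with `U_a = X 0`, `U_b = X 1`, `U_c = X 2`, `U_d = X 3`,
`U_e = X 4`, `U_f = X 5`, `U_g = X 6`. -/
abbrev R7 : Type := MvPolynomial (Fin 7) ℤ

/-- `L = (U_a + U_b − U_c − U_d, U_e + U_d − U_f − U_g)`. -/
noncomputable def L7 : Ideal R7 :=
  Ideal.span {X 0 + X 1 - X 2 - X 3, X 4 + X 3 - X 5 - X 6}

/-- `Q = (U_a U_b − U_c U_d, U_e U_d − U_f U_g, U_g − U_b)`. -/
noncomputable def Q7 : Ideal R7 :=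
  Ideal.span {X 0 * X 1 - X 2 * X 3, X 4 * X 3 - X 5 * X 6, X 6 - X 1}

/-!
Modulo `L + Q` we have `U_g = U_b` and `U_a − U_c = U_d − U_b = U_f − U_e`. Substituting,
`U_a U_e − U_c U_f` becomes `(U_d − U_b)(U_e − U_c)`, which the relations `U_e U_d = U_f U_b`
and `U_a U_b = U_c U_d` turn into `U_b (U_f − U_e + U_c − U_a) = 0`. Once the new generator
lies in `L + Q`, adjoining it to `Q` does not change `L + Q`.
-/

theorem Ideal.add_add_span_singleton_of_mem {S : Type*} [Semiring S] {I J : Ideal S} {x : S}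
    (hx : x ∈ I + J) : I + (J + Ideal.span {x}) = I + J := by
  rw [← add_assoc]
  exact sup_eq_left.2 ((Ideal.span_singleton_le_iff_mem _).2 hx)

theorem mem_L7_add_Q7 : (X 0 * X 4 - X 2 * X 5 : R7) ∈ L7 + Q7 := by
  have hL : (X 4 - X 1) * (X 0 + X 1 - X 2 - X 3) + (X 2 - X 1) * (X 4 + X 3 - X 5 - X 6)
      ∈ L7 :=
    Ideal.mem_span_pair.2 ⟨_, _, rfl⟩
  have hQ : (X 0 * X 1 - X 2 * X 3) + (X 4 * X 3 - X 5 * X 6) + (X 2 + X 5 - X 1) * (X 6 - X 1)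
      ∈ Q7 :=
    add_mem (add_mem (Ideal.subset_span (by simp)) (Ideal.subset_span (by simp)))
      (Ideal.mul_mem_left _ _ (Ideal.subset_span (by simp)))
  exact Submodule.mem_sup.2 ⟨_, hL, _, hQ, by ring⟩

/-- For the partial braid graph of Figure 3: `U_a U_e − U_c U_f ∈ L + Q`, and
consequently, for `N = Q + (U_a U_e − U_c U_f)`, one has `L + N = L + Q`. -/
theorem figure3_LN_eq_LQ :
    (X 0 * X 4 - X 2 * X 5 ∈ L7 + Q7)
      ∧ L7 + (Q7 + Ideal.span {X 0 * X 4 - X 2 * X 5}) = L7 + Q7 :=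
  ⟨mem_L7_add_Q7, Ideal.add_add_span_singleton_of_mem mem_L7_add_Q7⟩
end
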